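/- For every y₀ ∈ {−1,1} and every real w, one has (1/λ)·cosh(K·y₀ + A(w))·exp(B(w))/cosh(w) = 1/2 + (1/2)·(1−2p)·(1−2ε)·y₀·tanh(w). -/
import Mathlib

lemma sinh_half_log (p : ℝ) (hp0 : 0 < p) (hp1 : p < 1) :
    Real.sinh ((1 / 2) * Real.log ((1 - p) / p))
      = (1 - 2 * p) * Real.cosh ((1 / 2) * Real.log ((1 - p) / p)) := by
  set J := (1 / 2) * Real.log ((1 - p) / p) with hJ
  have hq : (0:ℝ) < (1 - p) / p := div_pos (by linarith) hp0
  have he : Real.exp J * Real.exp J = (1 - p) / p := by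
    rw [← Real.exp_add, hJ]
    have : (1 / 2) * Real.log ((1 - p) / p) + (1 / 2) * Real.log ((1 - p) / p)
        = Real.log ((1 - p) / p) := by ring
    rw [this, Real.exp_log hq]
  have hepos := Real.exp_pos J
  rw [Real.sinh_eq, Real.cosh_eq, Real.exp_neg]
  have hne : Real.exp J ≠ 0 := ne_of_gt hepos
  have hpne : p ≠ 0 := ne_of_gt hp0
  field_simp
  have he' : Real.exp J * Real.exp J * p = 1 - p := by
    field_simp at he; linarith [he]
  nlinarith [he']

/-- For every `y₀ ∈ {−1,1}` and every real `w`, one has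
`(1/λ)·cosh(K·y₀ + A(w))·exp(B(w))/cosh(w) = 1/2 + (1/2)·(1−2p)·(1−2ε)·y₀·tanh(w)`. -/
theorem stmt_16 (p ε : ℝ) (hp0 : 0 < p) (hp1 : p < 1) (hε0 : 0 < ε) (hε1 : ε < 1)
    (J K lam : ℝ)
    (hJ : J = (1 / 2) * Real.log ((1 - p) / p))
    (hK : K = (1 / 2) * Real.log ((1 - ε) / ε))
    (hlam : lam = 4 * Real.cosh J * Real.cosh K)
    (A B : ℝ → ℝ)
    (hA : ∀ u, A u = (1 / 2) * Real.log (Real.cosh (u + J) / Real.cosh (u - J)))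
    (hB : ∀ u, B u = (1 / 2) * Real.log (4 * Real.cosh (u + J) * Real.cosh (u - J)))
    (y₀ : ℝ) (hy₀ : y₀ = 1 ∨ y₀ = -1) (w : ℝ) :
    (1 / lam) * Real.cosh (K * y₀ + A w) * Real.exp (B w) / Real.cosh w
      = 1 / 2 + (1 / 2) * (1 - 2 * p) * (1 - 2 * ε) * y₀ * Real.tanh w := by
  have hsJ : Real.sinh J = (1 - 2 * p) * Real.cosh J := hJ ▸ sinh_half_log p hp0 hp1
  have hsK : Real.sinh K = (1 - 2 * ε) * Real.cosh K := hK ▸ sinh_half_log ε hε0 hε1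
  have hCp : (0:ℝ) < Real.cosh (w + J) := Real.cosh_pos _
  have hCm : (0:ℝ) < Real.cosh (w - J) := Real.cosh_pos _
  -- exp(A w + B w) = 2 cosh (w+J)
  have hsum : A w + B w = Real.log (2 * Real.cosh (w + J)) := by
    rw [hA, hB, ← mul_add,
      ← Real.log_mul (by positivity) (by positivity)]
    have h1 : Real.cosh (w + J) / Real.cosh (w - J) * (4 * Real.cosh (w + J) * Real.cosh (w - J))
        = (2 * Real.cosh (w + J)) ^ 2 := by field_simp; ring
    rw [h1, Real.log_pow]
    push_cast; ring
  have hdiff : B w - A w = Real.log (2 * Real.cosh (w - J)) := by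
    rw [hA, hB, ← mul_sub,
      ← Real.log_div (by positivity) (by positivity)]
    have h1 : 4 * Real.cosh (w + J) * Real.cosh (w - J) / (Real.cosh (w + J) / Real.cosh (w - J))
        = (2 * Real.cosh (w - J)) ^ 2 := by field_simp; ring
    rw [h1, Real.log_pow]
    push_cast; ring
  have e1 : Real.exp (A w + B w) = 2 * Real.cosh (w + J) := by
    rw [hsum, Real.exp_log (by positivity)]
  have e2 : Real.exp (B w - A w) = 2 * Real.cosh (w - J) := by
    rw [hdiff, Real.exp_log (by positivity)]
  have t1 : Real.exp (K * y₀ + A w) * Real.exp (B w)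
      = Real.exp (K * y₀) * Real.exp (A w + B w) := by
    rw [← Real.exp_add, ← Real.exp_add]; congr 1; ring
  have t2 : Real.exp (-(K * y₀ + A w)) * Real.exp (B w)
      = Real.exp (-(K * y₀)) * Real.exp (B w - A w) := by
    rw [← Real.exp_add, ← Real.exp_add]; congr 1; ring
  have hmain : Real.cosh (K * y₀ + A w) * Real.exp (B w)
      = Real.exp (K * y₀) * Real.cosh (w + J)
          + Real.exp (-(K * y₀)) * Real.cosh (w - J) := by
    calc Real.cosh (K * y₀ + A w) * Real.exp (B w)
        = (Real.exp (K * y₀ + A w) * Real.exp (B w)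
            + Real.exp (-(K * y₀ + A w)) * Real.exp (B w)) / 2 := by
          rw [Real.cosh_eq]; ring
      _ = (Real.exp (K * y₀) * (2 * Real.cosh (w + J))
            + Real.exp (-(K * y₀)) * (2 * Real.cosh (w - J))) / 2 := by
          rw [t1, t2, e1, e2]
      _ = _ := by ring
  rw [mul_assoc, hmain, hlam, Real.tanh_eq_sinh_div_cosh]
  have hcw : (0:ℝ) < Real.cosh w := Real.cosh_pos _
  have hcJ : (0:ℝ) < Real.cosh J := Real.cosh_pos _
  have hcK : (0:ℝ) < Real.cosh K := Real.cosh_pos _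
  rcases hy₀ with h | h <;> subst h <;>
    simp only [mul_one, mul_neg_one, neg_neg] <;>
    rw [Real.cosh_add, Real.cosh_sub,
      show Real.exp K = Real.cosh K + Real.sinh K from (Real.cosh_add_sinh K).symm,
      show Real.exp (-K) = Real.cosh K - Real.sinh K from (Real.cosh_sub_sinh K).symm,
      hsJ, hsK] <;>
    field_simp <;>
    ring
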